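/- Let P and N be finite sets of positive integers. Then there exist orderings p_1,...,p_{|P|} of P and n_1,...,n_{|N|} of N such that p_1+...+p_i ≠ n_1+...+n_j for all pairs (i,j) with 0 ≤ i ≤ |P|, 0 ≤ j ≤ |N|, except possibly (i,j) = (0,0) and (i,j) = (|P|,|N|). -/

import Mathlib

/-!
Induct on `|P| + |N|` and assume `∑ P ≤ ∑ N` by symmetry. If `P = ∅`, every nonempty partial sum
of `N` is positive. Otherwise choose `n ∈ N` with `∑ (N \ {n}) ≠ ∑ P` (possible because
`∑ P > 0`), order `P` and `N \ {n}` by induction and append `n` to the ordering of `N`. The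
formerly excluded corner `(|P|, |N| - 1)` is now handled by the choice of `n`, and the new last
column compares proper partial sums of `P`, which are `< ∑ P ≤ ∑ N`.
-/

/-- The partial sums a₁, a₁+a₂, ..., a₁+⋯+aₙ of the list are pairwise distinct. -/
def ValidOrdering {G : Type*} [AddCommGroup G] (l : List G) : Prop :=
  ((List.range l.length).map (fun i => (l.take (i + 1)).sum)).Nodup

/-- `l` is an ordering (an enumeration without repetition) of the finite set `A`. -/
def IsOrderingOf {G : Type*} [AddCommGroup G] (l : List G) (A : Finset G) : Prop :=
  l.Nodup ∧ ∀ a, a ∈ l ↔ a ∈ A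

open Finset

def AvoidsPartialSums {M : Type*} [AddMonoid M] (lp ln : List M) : Prop :=
  ∀ i j : ℕ, i ≤ lp.length → j ≤ ln.length →
    ¬(i = 0 ∧ j = 0) → ¬(i = lp.length ∧ j = ln.length) →
    (lp.take i).sum ≠ (ln.take j).sum

theorem AvoidsPartialSums.symm {M : Type*} [AddMonoid M] {lp ln : List M}
    (h : AvoidsPartialSums lp ln) : AvoidsPartialSums ln lp :=
  fun i j hi hj h₀ h₁ => (h j i hj hi (by tauto) (by tauto)).symm

section AddCommGroup

variable {G : Type*} [AddCommGroup G]

theorem isOrderingOf_toList (A : Finset G) : IsOrderingOf A.toList A :=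
  ⟨A.nodup_toList, fun _ => Finset.mem_toList⟩

theorem IsOrderingOf.sum_eq {l : List G} {A : Finset G} (h : IsOrderingOf l A) :
    l.sum = ∑ x ∈ A, x := by
  classical
  have hA : l.toFinset = A := by ext a; simp [h.2 a]
  rw [← hA, List.sum_toFinset (fun x => x) h.1, List.map_id']

variable [DecidableEq G]

theorem IsOrderingOf.append_singleton {l : List G} {A : Finset G} {a : G}
    (h : IsOrderingOf l (A.erase a)) (ha : a ∈ A) : IsOrderingOf (l ++ [a]) A := by
  refine ⟨List.nodup_append.2 ⟨h.1, List.nodup_singleton a, ?_⟩, fun x => ?_⟩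
  · simp only [List.mem_singleton]
    rintro x hx _ rfl rfl
    simp [h.2] at hx
  · by_cases hx : x = a <;> simp [h.2, hx, ha]

theorem Finset.exists_sum_erase_ne {N : Finset G} (hN : N.Nonempty) {t : G} (ht : t ≠ 0) :
    ∃ n ∈ N, ∑ x ∈ N.erase n, x ≠ t := by
  by_contra! h
  have hconst : ∀ m ∈ N, m = ∑ x ∈ N, x - t := fun m hm =>
    eq_sub_of_add_eq' (h m hm ▸ Finset.sum_erase_add N id hm)
  obtain ⟨n, hn⟩ := hN
  have hN : N = {n} := Finset.eq_singleton_iff_unique_mem.2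
    ⟨hn, fun m hm => (hconst m hm).trans (hconst n hn).symm⟩
  exact ht (by simpa [hN] using (h n hn).symm)

end AddCommGroup

variable {G : Type*} [AddCommGroup G] [LinearOrder G] [IsOrderedAddMonoid G]

namespace List

theorem sum_take_lt_sum {l : List G} (hpos : ∀ x ∈ l, 0 < x) {i : ℕ} (hi : i < l.length) :
    (l.take i).sum < l.sum := by
  have hdrop : 0 < (l.drop i).sum :=
    List.sum_pos _ (fun x hx => hpos x (List.mem_of_mem_drop hx))
      (by rw [Ne, List.drop_eq_nil_iff]; omega)
  calc (l.take i).sum < (l.take i).sum + (l.drop i).sum := lt_add_of_pos_right _ hdrop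
    _ = l.sum := by rw [← List.sum_append, List.take_append_drop]

theorem sum_take_pos {l : List G} (hpos : ∀ x ∈ l, 0 < x) {i : ℕ} (hi₀ : 0 < i)
    (hi : i ≤ l.length) : 0 < (l.take i).sum := by
  simpa using sum_take_lt_sum (fun x hx => hpos x (List.mem_of_mem_take hx))
    (i := 0) (by rw [List.length_take]; omega)

end List

namespace AvoidsPartialSums

theorem nil_left {ln : List G} (hpos : ∀ x ∈ ln, 0 < x) : AvoidsPartialSums [] ln := by
  intro i j hi hj h₀ _
  obtain rfl : i = 0 := by simpa using hi
  simpa using (List.sum_take_pos hpos (by omega) hj).ne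

theorem append_singleton {lp ln : List G} {n : G} (h : AvoidsPartialSums lp ln)
    (hpos : ∀ x ∈ lp, 0 < x) (hne : lp.sum ≠ ln.sum) (hle : lp.sum ≤ ln.sum + n) :
    AvoidsPartialSums lp (ln ++ [n]) := by
  intro i j hi hj h₀ h₁
  simp only [List.length_append, List.length_singleton] at hj h₁
  rcases Nat.lt_or_ge ln.length j with hj' | hj'
  · obtain rfl : j = ln.length + 1 := by omega
    rw [List.take_of_length_le (l := ln ++ [n]) (by simp), List.sum_append, List.sum_singleton]
    exact ((List.sum_take_lt_sum hpos (by omega)).trans_le hle).ne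
  · rw [List.take_append_of_le_length hj']
    by_cases hcorner : i = lp.length ∧ j = ln.length
    · rwa [hcorner.1, hcorner.2, List.take_length, List.take_length]
    · exact h i j hi hj' h₀ hcorner

end AvoidsPartialSums

theorem exists_isOrderingOf_avoidsPartialSums (P N : Finset G) (hP : ∀ x ∈ P, 0 < x)
    (hN : ∀ x ∈ N, 0 < x) :
    ∃ lp ln : List G, IsOrderingOf lp P ∧ IsOrderingOf ln N ∧ AvoidsPartialSums lp ln := by
  induction hk : #P + #N using Nat.strong_induction_on generalizing P N with
  | _ k ih =>
    wlog hle : ∑ x ∈ P, x ≤ ∑ x ∈ N, x generalizing P N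
    · obtain ⟨ln, lp, hln, hlp, h⟩ := this N P hN hP (by omega) (le_of_not_ge hle)
      exact ⟨lp, ln, hlp, hln, h.symm⟩
    obtain rfl | hPne := P.eq_empty_or_nonempty
    · exact ⟨[], N.toList, by simpa using isOrderingOf_toList (∅ : Finset G),
        isOrderingOf_toList N, .nil_left fun x hx => hN x (mem_toList.1 hx)⟩
    have hPpos : 0 < ∑ x ∈ P, x := sum_pos hP hPne
    have hNne : N.Nonempty := nonempty_of_sum_ne_zero (hPpos.trans_le hle).ne'
    obtain ⟨n, hn, hne⟩ := exists_sum_erase_ne hNne hPpos.ne'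
    obtain ⟨lp, ln, hlp, hln, h⟩ :=
      ih (#P + #(N.erase n)) (hk ▸ by simp [card_erase_lt_of_mem hn]) P (N.erase n) hP 
        (fun x hx => hN x (mem_of_mem_erase hx)) rfl
    refine ⟨lp, ln ++ [n], hlp, hln.append_singleton hn,
      h.append_singleton (fun x hx => hP x ((hlp.2 x).1 hx)) ?_ ?_⟩
    · rw [hlp.sum_eq, hln.sum_eq]
      exact hne.symm
    · rwa [hlp.sum_eq, hln.sum_eq, sum_erase_add _ _ hn]

theorem partial_sums_avoid (P N : Finset ℤ) (hP : ∀ x ∈ P, 0 < x) (hN : ∀ x ∈ N, 0 < x) :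
    ∃ lp ln : List ℤ, IsOrderingOf lp P ∧ IsOrderingOf ln N ∧
      ∀ i j : ℕ, i ≤ lp.length → j ≤ ln.length →
        ¬(i = 0 ∧ j = 0) → ¬(i = lp.length ∧ j = ln.length) →
        (lp.take i).sum ≠ (ln.take j).sum :=
  exists_isOrderingOf_avoidsPartialSums P N hP hN
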